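/- Let l ≥ 2 and n := 4(l−1). For c = (c₀,…,c_{l−1}) ∈ ℂ^l and every i ∈ {1,…,n}, Tr_i(|Ψ(c)⟩⟨Ψ(c)|) = (1/2)|Ψ₀⟩⟨Ψ₀| + (1/2)|Ψ₁⟩⟨Ψ₁|, where |Ψ₀⟩ := √2 · Σ_{y ∈ {0,1}^{n−1}, wt(y) even} ⟨y0 | Ψ(c)⟩ |y⟩ and |Ψ₁⟩ := √2 · Σ_{y ∈ {0,1}^{n−1}, wt(y) odd} ⟨y1 | Ψ(c)⟩ |y⟩ (here y0 and y1 denote y with a 0, respectively a 1, appended); moreover if ‖c‖ = 1 then |Ψ₀⟩ and |Ψ₁⟩ are unit vectors supported on the even-weight and odd-weight computational basis states of (ℂ²)^{⊗(n−1)} respectively. -/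
import Mathlib


/- Common setup: (ℂ²)^{⊗n} is modeled as functions {0,1}ⁿ → ℂ, with computational
basis kets, outer products |u⟩⟨v|, and the partial trace over the i-th tensor factor. -/

open Matrix
open scoped ComplexConjugate ComplexOrder

noncomputable section

/-- The computational basis ket `|s⟩` for a bit string `s ∈ {0,1}ⁿ`. -/
def ket {n : ℕ} (s : Fin n → Fin 2) : (Fin n → Fin 2) → ℂ :=
  fun x => if x = s then 1 else 0

/-- The outer product `|u⟩⟨v|`. -/
def outer {ι : Type*} (u v : ι → ℂ) : Matrix ι ι ℂ :=
  Matrix.of fun i j => u i * conj (v j)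

/-- The partial trace over the `i`-th tensor factor (the single deletion error `D_i`);
it satisfies `ptrace i (A₁ ⊗ ⋯ ⊗ Aₙ) = Tr(A_i) • A₁ ⊗ ⋯ ⊗ A_{i-1} ⊗ A_{i+1} ⊗ ⋯ ⊗ Aₙ`. -/
def ptrace {m : ℕ} (i : Fin (m + 1))
    (A : Matrix (Fin (m + 1) → Fin 2) (Fin (m + 1) → Fin 2) ℂ) :
    Matrix (Fin m → Fin 2) (Fin m → Fin 2) ℂ :=
  Matrix.of fun y y' => ∑ b : Fin 2, A (i.insertNth b y) (i.insertNth b y')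

/-- The Hamming weight of a bit string. -/
def wt {n : ℕ} (x : Fin n → Fin 2) : ℕ := ∑ j, (x j : ℕ)

/- Throughout, `l = k + 2` (so that `l ≥ 2`) and `n = 4(l-1) = 4k + 4`. -/

/-- `A_i = { x ∈ {0,1}ⁿ : wt(x) = 2i or wt(x) = n − 2i }` for `0 ≤ i ≤ l − 1`. -/
def Aset (k : ℕ) (i : Fin (k + 2)) : Finset (Fin (4 * k + 3 + 1) → Fin 2) :=
  Finset.univ.filter fun x => wt x = 2 * (i : ℕ) ∨ wt x = (4 * k + 4) - 2 * (i : ℕ)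

/-- The generalized encoding `|Ψ(c)⟩ = Σ_i c_i |A_i|^{−1/2} Σ_{x ∈ A_i} |x⟩`
of a level-`l` state `c ∈ ℂˡ` into `(ℂ²)^{⊗n}` (`l = k+2`, `n = 4(l−1)`). -/
def PsiGen (k : ℕ) (c : Fin (k + 2) → ℂ) : (Fin (4 * k + 3 + 1) → Fin 2) → ℂ :=
  ∑ i : Fin (k + 2),
    (c i * ((Real.sqrt ((Aset k i).card) : ℂ))⁻¹) • ∑ x ∈ Aset k i, ket x

/-- `|Ψ₀⟩ = √2 · Σ_{y even} ⟨y0|Ψ(c)⟩ |y⟩` (here `y0` is `y` with a `0` appended). -/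
def Psi0 (k : ℕ) (c : Fin (k + 2) → ℂ) : (Fin (4 * k + 3) → Fin 2) → ℂ :=
  (Real.sqrt 2 : ℂ) •
    ∑ y ∈ Finset.univ.filter fun y : Fin (4 * k + 3) → Fin 2 => Even (wt y),
      PsiGen k c (Fin.snoc y 0) • ket y

/-- `|Ψ₁⟩ = √2 · Σ_{y odd} ⟨y1|Ψ(c)⟩ |y⟩` (here `y1` is `y` with a `1` appended). -/
def Psi1 (k : ℕ) (c : Fin (k + 2) → ℂ) : (Fin (4 * k + 3) → Fin 2) → ℂ :=
  (Real.sqrt 2 : ℂ) •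
    ∑ y ∈ Finset.univ.filter fun y : Fin (4 * k + 3) → Fin 2 => ¬ Even (wt y),
      PsiGen k c (Fin.snoc y 1) • ket y

-- AUX
variable {k : ℕ}

def gfun (k : ℕ) (c : Fin (k + 2) → ℂ) (w : ℕ) : ℂ :=
  ∑ i : Fin (k + 2), c i * ((Real.sqrt ((Aset k i).card) : ℂ))⁻¹ *
    (if w = 2 * (i : ℕ) ∨ w = (4 * k + 4) - 2 * (i : ℕ) then 1 else 0)

lemma mem_Aset {i : Fin (k+2)} {x} :
    x ∈ Aset k i ↔ (wt x = 2 * (i : ℕ) ∨ wt x = (4 * k + 4) - 2 * (i : ℕ)) := by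
  simp [Aset]

lemma PsiGen_eq (c : Fin (k + 2) → ℂ) (x) : PsiGen k c x = gfun k c (wt x) := by
  unfold PsiGen gfun
  rw [Finset.sum_apply]
  refine Finset.sum_congr rfl fun i _ => ?_
  rw [Pi.smul_apply, Finset.sum_apply, smul_eq_mul]
  congr 1
  simp only [ket]
  rw [Finset.sum_ite_eq (Aset k i) x (fun _ => (1:ℂ))]
  by_cases h : x ∈ Aset k i
  · rw [if_pos h, if_pos (mem_Aset.mp h)]
  · rw [if_neg h, if_neg (fun hc => h (mem_Aset.mpr hc))]

lemma wt_snoc {m : ℕ} (y : Fin m → Fin 2) (b : Fin 2) :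
    wt (Fin.snoc y b) = wt y + (b : ℕ) := by
  unfold wt
  rw [Fin.sum_univ_castSucc]
  simp

lemma wt_insertNth {m : ℕ} (i : Fin (m+1)) (b : Fin 2) (y : Fin m → Fin 2) :
    wt (i.insertNth b y) = wt y + (b : ℕ) := by
  unfold wt
  rw [Fin.sum_univ_succAbove _ i]
  simp [add_comm]

lemma wt_le {m : ℕ} (y : Fin m → Fin 2) : wt y ≤ m := by
  unfold wt
  calc ∑ j, ((y j : ℕ)) ≤ ∑ _j : Fin m, 1 :=
        Finset.sum_le_sum fun j _ => Nat.lt_succ_iff.mp (y j).isLt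
    _ = m := by simp

lemma gfun_odd (c : Fin (k+2) → ℂ) {w : ℕ} (hw : ¬ Even w) : gfun k c w = 0 := by
  unfold gfun
  refine Finset.sum_eq_zero fun i _ => ?_
  have hi : (i : ℕ) ≤ k + 1 := Fin.is_le i
  rw [Nat.even_iff] at hw
  rw [if_neg (by omega), mul_zero]

lemma gfun_compl (c : Fin (k+2) → ℂ) {w : ℕ} (hw : w ≤ 4*k+4) :
    gfun k c (4*k+4-w) = gfun k c w := by
  unfold gfun
  refine Finset.sum_congr rfl fun i _ => ?_
  have hi : (i : ℕ) ≤ k + 1 := Fin.is_le i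
  congr 1
  exact if_congr (by omega) rfl rfl

def flipBit : Fin 2 → Fin 2 := fun b => if b = 0 then 1 else 0

lemma flipBit_flipBit : ∀ b, flipBit (flipBit b) = b := by decide

lemma flipBit_val : ∀ b : Fin 2, (flipBit b : ℕ) + (b : ℕ) = 1 := by decide

lemma wt_flip {m : ℕ} (y : Fin m → Fin 2) : wt (fun j => flipBit (y j)) + wt y = m := by
  unfold wt
  rw [← Finset.sum_add_distrib]
  simp [flipBit_val]

lemma sum_comp_flip {m : ℕ} (F : (Fin m → Fin 2) → ℂ) :
    ∑ y : Fin m → Fin 2, F (fun j => flipBit (y j)) = ∑ y, F y := by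
  exact Fintype.sum_bijective (fun y : Fin m → Fin 2 => fun j => flipBit (y j))
    (Function.Involutive.bijective fun y => funext fun j => flipBit_flipBit (y j))
    _ F (fun y => rfl)

lemma Aset_nonempty (i : Fin (k+2)) : (Aset k i).Nonempty := by
  have hi : 2 * (i:ℕ) < 4*k+3+1 := by have := Fin.is_le i; omega
  refine ⟨fun j => if j < (⟨2*(i:ℕ), hi⟩ : Fin (4*k+3+1)) then 1 else 0, ?_⟩
  rw [mem_Aset]
  left
  unfold wt
  have h1 : ∀ j : Fin (4*k+3+1),
      (((if j < (⟨2*(i:ℕ), hi⟩ : Fin (4*k+3+1)) then (1:Fin 2) else 0) : Fin 2) : ℕ)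
      = if j < (⟨2*(i:ℕ), hi⟩ : Fin (4*k+3+1)) then 1 else 0 := by
    intro j; split <;> rfl
  simp_rw [h1]
  rw [Finset.sum_boole]
  have h2 : Finset.univ.filter (fun j : Fin (4*k+3+1) => j < (⟨2*(i:ℕ), hi⟩ : Fin (4*k+3+1)))
      = Finset.Iio (⟨2*(i:ℕ), hi⟩ : Fin (4*k+3+1)) := by
    ext j; simp
  rw [h2, Fin.card_Iio]
  simp

lemma Aset_disjoint {i j : Fin (k+2)} (h : i ≠ j) : Disjoint (Aset k i) (Aset k j) := by
  rw [Finset.disjoint_left]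
  intro x hx hx'
  rw [mem_Aset] at hx hx'
  have hi : (i:ℕ) ≤ k+1 := Fin.is_le i
  have hj : (j:ℕ) ≤ k+1 := Fin.is_le j
  have hne : (i:ℕ) ≠ (j:ℕ) := fun hh => h (Fin.ext hh)
  omega

lemma gfun_of_mem (c : Fin (k+2) → ℂ) {i : Fin (k+2)} {x} (hx : x ∈ Aset k i) :
    gfun k c (wt x) = c i * ((Real.sqrt ((Aset k i).card) : ℂ))⁻¹ := by
  unfold gfun
  rw [Finset.sum_eq_single i]
  · rw [if_pos (mem_Aset.mp hx), mul_one]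
  · intro j _ hji
    rw [if_neg, mul_zero]
    intro hcond
    exact Finset.disjoint_left.mp (Aset_disjoint hji) (mem_Aset.mpr hcond) hx
  · intro hi; exact absurd (Finset.mem_univ i) hi

lemma sum_normSq_PsiGen (c : Fin (k+2) → ℂ) :
    ∑ x, star (PsiGen k c x) * PsiGen k c x = ∑ j, star (c j) * c j := by
  classical
  rw [← Finset.sum_subset (Finset.subset_univ (Finset.univ.biUnion (Aset k)))
    (fun x _ hx => ?_)]
  · rw [Finset.sum_biUnion (fun a _ b _ hab => Aset_disjoint hab)]
    refine Finset.sum_congr rfl fun i _ => ?_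
    have hcard : 0 < (Aset k i).card := Finset.card_pos.mpr (Aset_nonempty i)
    have hcc : ((Aset k i).card : ℂ) ≠ 0 := by exact_mod_cast hcard.ne'
    have hss : ((Real.sqrt ((Aset k i).card) : ℝ) : ℂ) * ((Real.sqrt ((Aset k i).card) : ℝ) : ℂ)
        = ((Aset k i).card : ℂ) := by
      norm_cast
      rw [Real.mul_self_sqrt (by positivity)]
    have key : ∀ x ∈ Aset k i, star (PsiGen k c x) * PsiGen k c x
        = star (c i) * c i * (((Aset k i).card : ℂ))⁻¹ := by
      intro x hx
      rw [PsiGen_eq, gfun_of_mem c hx]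
      rw [star_mul', star_inv₀, Complex.star_def, Complex.conj_ofReal, ← hss]
      field_simp
    rw [Finset.sum_congr rfl key, Finset.sum_const, nsmul_eq_mul]
    field_simp
  · simp only [Finset.mem_biUnion, Finset.mem_univ, true_and, not_exists] at hx
    have hz : PsiGen k c x = 0 := by
      rw [PsiGen_eq]
      refine Finset.sum_eq_zero fun i _ => ?_
      rw [if_neg (fun hc => hx i (mem_Aset.mpr hc)), mul_zero]
    rw [hz, mul_zero]

lemma Psi0_apply (c : Fin (k+2) → ℂ) (y : Fin (4*k+3) → Fin 2) :
    Psi0 k c y = if Even (wt y) then (Real.sqrt 2 : ℂ) * PsiGen k c (Fin.snoc y 0) else 0 := by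
  unfold Psi0
  rw [Pi.smul_apply, Finset.sum_apply, smul_eq_mul]
  have h : ∀ y' ∈ Finset.univ.filter fun y' : Fin (4 * k + 3) → Fin 2 => Even (wt y'),
      (PsiGen k c (Fin.snoc y' 0) • ket y') y
        = if y = y' then PsiGen k c (Fin.snoc y' 0) else 0 := by
    intro y' _
    rw [Pi.smul_apply, smul_eq_mul]
    simp [ket]
  rw [Finset.sum_congr rfl h, Finset.sum_ite_eq]
  simp only [Finset.mem_filter, Finset.mem_univ, true_and]
  split
  · rfl
  · rw [mul_zero]

lemma Psi1_apply (c : Fin (k+2) → ℂ) (y : Fin (4*k+3) → Fin 2) :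
    Psi1 k c y = if ¬ Even (wt y) then (Real.sqrt 2 : ℂ) * PsiGen k c (Fin.snoc y 1) else 0 := by
  unfold Psi1
  rw [Pi.smul_apply, Finset.sum_apply, smul_eq_mul]
  have h : ∀ y' ∈ Finset.univ.filter fun y' : Fin (4 * k + 3) → Fin 2 => ¬ Even (wt y'),
      (PsiGen k c (Fin.snoc y' 1) • ket y') y
        = if y = y' then PsiGen k c (Fin.snoc y' 1) else 0 := by
    intro y' _
    rw [Pi.smul_apply, smul_eq_mul]
    simp [ket]
  rw [Finset.sum_congr rfl h, Finset.sum_ite_eq]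
  simp only [Finset.mem_filter, Finset.mem_univ, true_and]
  split
  · rfl
  · rw [mul_zero]

lemma sum_split (F : (Fin (4*k+3+1) → Fin 2) → ℂ) :
    ∑ x, F x = (∑ y : Fin (4*k+3) → Fin 2, F (Fin.snoc y 0))
      + (∑ y : Fin (4*k+3) → Fin 2, F (Fin.snoc y 1)) := by
  rw [← (Fin.snocEquiv (fun _ : Fin (4*k+3+1) => Fin 2)).sum_comp F]
  rw [Fintype.sum_prod_type, Fin.sum_univ_two]
  simp [Fin.snocEquiv]

lemma S0_eq_S1 (c : Fin (k+2) → ℂ) :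
    (∑ y : Fin (4*k+3) → Fin 2,
        star (PsiGen k c (Fin.snoc y 0)) * PsiGen k c (Fin.snoc y 0))
    = ∑ y : Fin (4*k+3) → Fin 2,
        star (PsiGen k c (Fin.snoc y 1)) * PsiGen k c (Fin.snoc y 1) := by
  rw [← sum_comp_flip
    (fun y => star (PsiGen k c (Fin.snoc y 0)) * PsiGen k c (Fin.snoc y 0))]
  refine Finset.sum_congr rfl fun y _ => ?_
  have hw := wt_flip y
  have h2 : wt y ≤ 4*k+3 := wt_le y
  simp only [PsiGen_eq, wt_snoc, Fin.val_zero, Fin.val_one, add_zero]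
  have h1 : wt (fun j => flipBit (y j)) = 4*k+4 - (wt y + 1) := by omega
  rw [h1, gfun_compl c (by omega)]

/-- for `l = k + 2 ≥ 2`, `n = 4(l−1)`, every `c ∈ ℂˡ` and every deletion
position `i`, `Tr_i(|Ψ(c)⟩⟨Ψ(c)|) = ½|Ψ₀⟩⟨Ψ₀| + ½|Ψ₁⟩⟨Ψ₁|`; moreover if `c` is a unit
vector then `|Ψ₀⟩` and `|Ψ₁⟩` are unit vectors supported on the even-weight and
odd-weight computational basis states of `(ℂ²)^{⊗(n−1)}` respectively. -/
theorem generalized_deletion_output (k : ℕ) (c : Fin (k + 2) → ℂ)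
    (i : Fin (4 * k + 3 + 1)) :
    (ptrace i (outer (PsiGen k c) (PsiGen k c))
        = ((1 : ℂ) / 2) • outer (Psi0 k c) (Psi0 k c)
          + ((1 : ℂ) / 2) • outer (Psi1 k c) (Psi1 k c))
      ∧ ((∑ j, star (c j) * c j) = 1 →
          (∑ y, star (Psi0 k c y) * Psi0 k c y) = 1
            ∧ (∑ y, star (Psi1 k c y) * Psi1 k c y) = 1
            ∧ (∀ y, ¬ Even (wt y) → Psi0 k c y = 0)
            ∧ (∀ y, Even (wt y) → Psi1 k c y = 0)) := by
  have hs2 : ((Real.sqrt 2 : ℝ) : ℂ) * ((Real.sqrt 2 : ℝ) : ℂ) = 2 := by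
    norm_cast
    exact Real.mul_self_sqrt (by norm_num)
  have hstar2 : star ((Real.sqrt 2 : ℝ) : ℂ) = ((Real.sqrt 2 : ℝ) : ℂ) := by
    rw [Complex.star_def, Complex.conj_ofReal]
  constructor
  · ext y y'
    simp only [ptrace, outer, Matrix.of_apply, Matrix.add_apply, Matrix.smul_apply,
      smul_eq_mul, Fin.sum_univ_two]
    rw [Psi0_apply, Psi0_apply, Psi1_apply, Psi1_apply]
    simp only [PsiGen_eq, wt_insertNth, wt_snoc, Fin.val_zero, Fin.val_one, add_zero]
    by_cases hy : Even (wt y) <;> by_cases hy' : Even (wt y')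
    · rw [if_pos hy, if_pos hy', if_neg (not_not_intro hy), if_neg (not_not_intro hy'),
        gfun_odd c (w := wt y + 1) (by simp [Nat.even_add_one, hy]),
        gfun_odd c (w := wt y' + 1) (by simp [Nat.even_add_one, hy'])]
      simp only [_root_.map_mul, map_zero, mul_zero, zero_mul, add_zero, Complex.star_def,
        Complex.conj_ofReal]
      linear_combination
        (-(gfun k c (wt y) * (starRingEnd ℂ) (gfun k c (wt y'))) / 2) * hs2
    · rw [gfun_odd c (w := wt y') hy', gfun_odd c (w := wt y + 1)
        (by simp [Nat.even_add_one, hy]), if_neg hy', if_neg (not_not_intro hy)]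
      simp
    · rw [gfun_odd c (w := wt y) hy, gfun_odd c (w := wt y' + 1)
        (by simp [Nat.even_add_one, hy']), if_neg hy, if_neg (not_not_intro hy')]
      simp
    · rw [if_neg hy, if_neg hy', if_pos hy, if_pos hy',
        gfun_odd c (w := wt y) hy, gfun_odd c (w := wt y') hy']
      simp only [_root_.map_mul, map_zero, mul_zero, zero_mul, zero_add, Complex.star_def,
        Complex.conj_ofReal]
      linear_combination
        (-(gfun k c (wt y + 1) * (starRingEnd ℂ) (gfun k c (wt y' + 1))) / 2) * hs2
  · intro hc
    have htot : (∑ y : Fin (4*k+3) → Fin 2,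
          star (PsiGen k c (Fin.snoc y 0)) * PsiGen k c (Fin.snoc y 0))
        + (∑ y : Fin (4*k+3) → Fin 2,
          star (PsiGen k c (Fin.snoc y 1)) * PsiGen k c (Fin.snoc y 1)) = 1 := by
      have h := sum_split (k := k) (fun x => star (PsiGen k c x) * PsiGen k c x)
      rw [← h, sum_normSq_PsiGen, hc]
    have heq := S0_eq_S1 c
    have h0sum : (∑ y, star (Psi0 k c y) * Psi0 k c y)
        = 2 * ∑ y : Fin (4*k+3) → Fin 2,
            star (PsiGen k c (Fin.snoc y 0)) * PsiGen k c (Fin.snoc y 0) := by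
      rw [Finset.mul_sum]
      refine Finset.sum_congr rfl fun y _ => ?_
      rw [Psi0_apply]
      by_cases hy : Even (wt y)
      · rw [if_pos hy, star_mul', hstar2]
        linear_combination (star (PsiGen k c (Fin.snoc y 0)) * PsiGen k c (Fin.snoc y 0)) * hs2
      · rw [if_neg hy, PsiGen_eq, wt_snoc]
        simp only [Fin.val_zero, add_zero]
        rw [gfun_odd c hy]
        simp
    have h1sum : (∑ y, star (Psi1 k c y) * Psi1 k c y)
        = 2 * ∑ y : Fin (4*k+3) → Fin 2,
            star (PsiGen k c (Fin.snoc y 1)) * PsiGen k c (Fin.snoc y 1) := by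
      rw [Finset.mul_sum]
      refine Finset.sum_congr rfl fun y _ => ?_
      rw [Psi1_apply]
      by_cases hy : Even (wt y)
      · rw [if_neg (not_not_intro hy), PsiGen_eq, wt_snoc]
        simp only [Fin.val_one]
        rw [gfun_odd c (by simp [Nat.even_add_one, hy])]
        simp
      · rw [if_pos hy, star_mul', hstar2]
        linear_combination (star (PsiGen k c (Fin.snoc y 1)) * PsiGen k c (Fin.snoc y 1)) * hs2
    refine ⟨?_, ?_, ?_, ?_⟩
    · rw [h0sum]; linear_combination htot + heq
    · rw [h1sum]; linear_combination htot - heq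
    · intro y hy; rw [Psi0_apply, if_neg hy]
    · intro y hy; rw [Psi1_apply, if_neg (not_not_intro hy)]

end
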